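/- For every φ ∈ (0, π) and every pair (i, j) of distinct qubits among N qubits, the product states |0⟩^{⊗N} and |φ⁺⟩^{⊗N} with |φ⁺⟩ = cos(φ/2)|0⟩ + sin(φ/2)|1⟩ are fixed by the two-qubit controlled unitary U_{ij}^{(φ)} = |0⟩⟨0|ᵢ ⊗ Iⱼ + |1⟩⟨1|ᵢ ⊗ (cos φ Zⱼ + sin φ Xⱼ) (acting as identity on the other N−2 qubits): U_{ij}^{(φ)}|0⟩^{⊗N} = |0⟩^{⊗N} and U_{ij}^{(φ)}|φ⁺⟩^{⊗N} = |φ⁺⟩^{⊗N}. -/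

import Mathlib

/-!
On a basis state whose control qubit is `0` the gate acts as the identity; on one whose control
qubit is `1` it applies `Uphi φ` to the target qubit and leaves the other qubits alone. So a
product state `v^{⊗N}` is fixed as soon as its control-`1` amplitudes vanish (`v 1 = 0`, e.g.
`|0⟩`) or `v` is a `+1` eigenvector of the reflection `Uphi φ`, which `|φ⁺⟩` is by the
angle-subtraction formulas.
-/

open Matrix

/-- The single-qubit interaction `U^(φ) = cos φ · Z + sin φ · X`. -/
noncomputable def Uphi (φ : ℝ) : Matrix (Fin 2) (Fin 2) ℂ :=
  !![(Real.cos φ : ℂ), (Real.sin φ : ℂ); (Real.sin φ : ℂ), (-Real.cos φ : ℂ)]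

/-- The product state `|v⟩^{⊗N}` of `N` qubits, in the computational basis
representation of `(ℂ²)^{⊗N}` as functions `(Fin N → Fin 2) → ℂ`. -/
noncomputable def prodState (N : ℕ) (v : Fin 2 → ℂ) : (Fin N → Fin 2) → ℂ :=
  fun z => ∏ m, v (z m)

/-- `|φ⁺⟩ = cos(φ/2)|0⟩ + sin(φ/2)|1⟩`. -/
noncomputable def phiPlus (φ : ℝ) : Fin 2 → ℂ :=
  ![(Real.cos (φ / 2) : ℂ), (Real.sin (φ / 2) : ℂ)]

/-- `|φ⁻⟩ = sin(φ/2)|0⟩ − cos(φ/2)|1⟩`. -/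
noncomputable def phiMinus (φ : ℝ) : Fin 2 → ℂ :=
  ![(Real.sin (φ / 2) : ℂ), (-Real.cos (φ / 2) : ℂ)]

/-- The single-qubit state `|0⟩`. -/
noncomputable def qzero : Fin 2 → ℂ := ![1, 0]

/-- The two-qubit controlled unitary `U_{ij}^{(φ)}` acting on `N` qubits, with control
qubit `i` and target qubit `j`, acting as identity on all other qubits. -/
noncomputable def cu2 (N : ℕ) (φ : ℝ) (i j : Fin N) :
    Matrix (Fin N → Fin 2) (Fin N → Fin 2) ℂ :=
  fun z w =>
    if w i = 0 then (if z = w then 1 else 0)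
    else if ∀ m, m ≠ j → z m = w m then Uphi φ (z j) (w j) else 0

lemma uphi_mulVec_phiPlus (φ : ℝ) : Uphi φ *ᵥ phiPlus φ = phiPlus φ := by
  ext a
  fin_cases a <;>
    simp only [mulVec, dotProduct, Fin.sum_univ_two, Uphi, phiPlus, of_apply, cons_val',
      cons_val_fin_one, cons_val_zero, cons_val_one, Fin.zero_eta, Fin.mk_one, Fin.isValue,
      neg_mul, Complex.ofReal_cos, Complex.ofReal_sin, Complex.ofReal_div, Complex.ofReal_ofNat]
  · rw [← Complex.cos_sub, sub_half]
  · rw [← sub_eq_add_neg, ← Complex.sin_sub, sub_half]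

section

variable {N : ℕ} {φ : ℝ} {i j : Fin N}

lemma cu2_mulVec_apply_of_control_eq_zero (hij : i ≠ j) (f : (Fin N → Fin 2) → ℂ)
    {z : Fin N → Fin 2} (hz : z i = 0) : (cu2 N φ i j *ᵥ f) z = f z := by
  rw [mulVec, dotProduct, Fintype.sum_eq_single z]
  · simp [cu2, hz]
  intro w hwz
  by_cases hwi : w i = 0
  · simp [cu2, hwi, Ne.symm hwz]
  · have : ¬ ∀ m, m ≠ j → z m = w m := fun h => hwi (h i hij ▸ hz)
    simp [cu2, hwi, this]

lemma cu2_mulVec_apply_of_control_ne_zero (hij : i ≠ j) (f : (Fin N → Fin 2) → ℂ)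
    {z : Fin N → Fin 2} (hz : z i ≠ 0) :
    (cu2 N φ i j *ᵥ f) z = ∑ b, Uphi φ (z j) b * f (Function.update z j b) := by
  rw [mulVec, dotProduct]
  refine (Fintype.sum_of_injective (Function.update z j) (Function.update_injective z j) _ _
    ?_ fun b => ?_).symm
  · intro w hw
    by_cases hwi : w i = 0
    · have : z ≠ w := fun h => hz (h ▸ hwi)
      simp [cu2, hwi, this]
    · have : ¬ ∀ m, m ≠ j → z m = w m := fun h =>
        hw ⟨w j, Function.update_eq_iff.2 ⟨rfl, h⟩⟩
      simp [cu2, hwi, this]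
  · have hb : Function.update z j b i ≠ 0 := by rwa [Function.update_of_ne hij]
    simp only [cu2]
    rw [if_neg hb, if_pos fun m (hm : m ≠ j) => (Function.update_of_ne hm b z).symm,
      Function.update_self]

lemma prodState_update (v : Fin 2 → ℂ) (z : Fin N → Fin 2) (j : Fin N) (b : Fin 2) :
    prodState N v (Function.update z j b) = v b * ∏ m ∈ Finset.univ \ {j}, v (z m) := by
  rw [prodState, ← Function.comp_def, Function.comp_update,
    Finset.prod_update_of_mem (Finset.mem_univ j)]
  rfl

lemma prodState_eq_mul_prod_sdiff (v : Fin 2 → ℂ) (z : Fin N → Fin 2) (j : Fin N) :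
    prodState N v z = v (z j) * ∏ m ∈ Finset.univ \ {j}, v (z m) := by
  simpa using prodState_update v z j (z j)

lemma cu2_mulVec_prodState_apply_of_control_ne_zero (hij : i ≠ j) (v : Fin 2 → ℂ)
    {z : Fin N → Fin 2} (hz : z i ≠ 0) :
    (cu2 N φ i j *ᵥ prodState N v) z =
      (Uphi φ *ᵥ v) (z j) * ∏ m ∈ Finset.univ \ {j}, v (z m) := by
  rw [cu2_mulVec_apply_of_control_ne_zero hij _ hz]
  simp only [prodState_update, mulVec, dotProduct, Finset.sum_mul, mul_assoc]

theorem cu2_mulVec_prodState_of_apply_one_eq_zero (hij : i ≠ j) {v : Fin 2 → ℂ}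
    (hv : v 1 = 0) :
    cu2 N φ i j *ᵥ prodState N v = prodState N v := by
  ext z
  by_cases hz : z i = 0
  · exact cu2_mulVec_apply_of_control_eq_zero hij _ hz
  have hz1 : z i = 1 := Fin.eq_one_of_ne_zero _ hz
  have hi : i ∈ Finset.univ \ {j} := by simpa using hij
  rw [cu2_mulVec_prodState_apply_of_control_ne_zero hij v hz, prodState_eq_mul_prod_sdiff v z j,
    Finset.prod_eq_zero hi (by rw [hz1, hv]), mul_zero, mul_zero]

theorem cu2_mulVec_prodState_of_mulVec_eq (hij : i ≠ j) {v : Fin 2 → ℂ}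
    (hv : Uphi φ *ᵥ v = v) :
    cu2 N φ i j *ᵥ prodState N v = prodState N v := by
  ext z
  by_cases hz : z i = 0
  · exact cu2_mulVec_apply_of_control_eq_zero hij _ hz
  rw [cu2_mulVec_prodState_apply_of_control_ne_zero hij v hz, hv,
    prodState_eq_mul_prod_sdiff v z j]

end

theorem cu2_fixes_zero_and_plus_general (N : ℕ) (φ : ℝ)
    (i j : Fin N) (hij : i ≠ j) :
    cu2 N φ i j *ᵥ prodState N qzero = prodState N qzero ∧
    cu2 N φ i j *ᵥ prodState N (phiPlus φ) = prodState N (phiPlus φ) :=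
  ⟨cu2_mulVec_prodState_of_apply_one_eq_zero hij rfl,
    cu2_mulVec_prodState_of_mulVec_eq hij (uphi_mulVec_phiPlus φ)⟩

/-- The product states `|0⟩^{⊗N}` and `|φ⁺⟩^{⊗N}` are fixed by every two-qubit
cu-interaction `U_{ij}^{(φ)}`. -/
theorem cu2_fixes_zero_and_plus (N : ℕ) (φ : ℝ) (hφ : φ ∈ Set.Ioo 0 Real.pi)
    (i j : Fin N) (hij : i ≠ j) :
    cu2 N φ i j *ᵥ prodState N qzero = prodState N qzero ∧
    cu2 N φ i j *ᵥ prodState N (phiPlus φ) = prodState N (phiPlus φ) :=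
  cu2_fixes_zero_and_plus_general N φ i j hij
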